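/- arXiv:2008.04423 — 6 statements merged into one kernel-verified Lean document; each statement's English description precedes it below -/
import Mathlib

section
/- Let F and G be CDFs of probability measures μ and ν on ℝ with characteristic functions φ_μ(u) = ∫ e^{iux} dμ and φ_ν(u) = ∫ e^{iux} dν. Then for every u ∈ ℝ and every K > 0: |φ_ν(u) - φ_μ(u)| ≤ 4‖G - F‖ + 2K|u|·‖G - F‖ + 2F(-K) + 2(1 - F(K)), where ‖G - F‖ = sup_x |G(x) - F(x)|. -/
/-!
Split both integrals at `(-K, K]`. Inside, integrate `f x = exp (i u x)` by parts against the
distribution function: `∫_(a,b] f dμ = F b f b - F a f a - ∫_a^b F f'` (Fubini on `a < x ≤ t ≤ b`).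
In the difference of the two integrals only `G - F` survives, giving at most
`(|f K| + |f (-K)| + 2K sup |f'|) ‖G - F‖ = (2 + 2K|u|) ‖G - F‖`. Outside, `|f| ≤ 1` bounds the
integral against `μ` by `F (-K) + 1 - F K`, and the one against `ν` by the same plus `2 ‖G - F‖`.
-/

open MeasureTheory Set intervalIntegral

theorem monotone_measureReal_Iic (μ : Measure ℝ) [IsFiniteMeasure μ] :
    Monotone fun t => μ.real (Iic t) :=
  fun _ _ h => measureReal_mono (Iic_subset_Iic.2 h)

theorem measureReal_Ioc_eq_sub (μ : Measure ℝ) [IsFiniteMeasure μ] {a b : ℝ} (hab : a ≤ b) :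
    μ.real (Ioc a b) = μ.real (Iic b) - μ.real (Iic a) := by
  rw [← Iic_sdiff_Iic, measureReal_sdiff (Iic_subset_Iic.2 hab) measurableSet_Iic]

theorem abs_measureReal_Iic_sub_le_iSup (μ ν : Measure ℝ) [IsProbabilityMeasure μ]
    [IsProbabilityMeasure ν] (x : ℝ) :
    |ν.real (Iic x) - μ.real (Iic x)| ≤ ⨆ y : ℝ, |ν.real (Iic y) - μ.real (Iic y)| := by
  refine le_ciSup (f := fun y => |ν.real (Iic y) - μ.real (Iic y)|) ⟨1, ?_⟩ x
  rintro _ ⟨y, rfl⟩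
  exact abs_sub_le_of_nonneg_of_le measureReal_nonneg measureReal_le_one measureReal_nonneg
    measureReal_le_one

section

variable {E : Type*} [NormedAddCommGroup E] [NormedSpace ℝ E]

theorem norm_setIntegral_compl_Ioc_le (μ : Measure ℝ) [IsProbabilityMeasure μ] {f : ℝ → E}
    (hf : ∀ x, ‖f x‖ ≤ 1) (a b : ℝ) (hab : a ≤ b) :
    ‖∫ x in (Ioc a b)ᶜ, f x ∂μ‖ ≤ 1 - (μ.real (Iic b) - μ.real (Iic a)) := by
  have := norm_setIntegral_le_of_norm_le_const (s := (Ioc a b)ᶜ) (μ := μ) (measure_lt_top _ _)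
    fun x _ => hf x
  rwa [one_mul, measureReal_compl measurableSet_Ioc, probReal_univ,
    measureReal_Ioc_eq_sub μ hab] at this

theorem norm_integral_sub_integral_le_split {α : Type*} [MeasurableSpace α] {μ ν : Measure α}
    {f : α → E} (hfμ : Integrable f μ) (hfν : Integrable f ν) {s : Set α} (hs : MeasurableSet s) :
    ‖∫ x, f x ∂ν - ∫ x, f x ∂μ‖
      ≤ ‖∫ x in s, f x ∂ν - ∫ x in s, f x ∂μ‖ + ‖∫ x in sᶜ, f x ∂ν‖ + ‖∫ x in sᶜ, f x ∂μ‖ := by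
  rw [← integral_add_compl hs hfν, ← integral_add_compl hs hfμ]
  calc _ = ‖(∫ x in s, f x ∂ν - ∫ x in s, f x ∂μ) + ∫ x in sᶜ, f x ∂ν - ∫ x in sᶜ, f x ∂μ‖ := by
        congr 1; abel
    _ ≤ _ := (norm_sub_le _ _).trans (add_le_add_left (norm_add_le _ _) _)

variable [CompleteSpace E]

theorem setIntegral_Ioc_intervalIntegral_eq (μ : Measure ℝ) [IsFiniteMeasure μ] {g : ℝ → E}
    (hg : Continuous g) {a b : ℝ} (hab : a ≤ b) :
    ∫ x in Ioc a b, (∫ t in x..b, g t) ∂μ = ∫ t in a..b, μ.real (Ioc a t) • g t := by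
  set k : ℝ → ℝ → E := fun t x => (Iic t).indicator (fun _ => g t) x
  have hk : Integrable (Function.uncurry k)
      ((volume.restrict (uIoc a b)).prod (μ.restrict (Ioc a b))) := by
    have hmeas : StronglyMeasurable (Function.uncurry k) :=
      (hg.stronglyMeasurable.comp_measurable measurable_fst).indicator
        (measurableSet_le measurable_snd measurable_fst)
    refine Integrable.mono' ((hg.intervalIntegrable a b).def'.norm.comp_fst _)
      hmeas.aestronglyMeasurable (ae_of_all _ fun p => ?_)
    exact norm_indicator_le_norm_self (fun _ => g p.1) p.2
  have inner_x : ∀ x ∈ Ioc a b, ∫ t in a..b, k t x = ∫ t in x..b, g t := by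
    intro x hx
    have : (fun t => k t x) = (Ici x).indicator g := by
      ext t; simp [k, indicator_apply]
    have hIcc : Ioc a b ∩ Ici x = Icc x b := by
      ext t; simp only [mem_inter_iff, mem_Ioc, mem_Ici, mem_Icc]
      constructor
      · rintro ⟨⟨-, htb⟩, hxt⟩; exact ⟨hxt, htb⟩
      · rintro ⟨hxt, htb⟩; exact ⟨⟨hx.1.trans_le hxt, htb⟩, hxt⟩
    rw [this, integral_of_le hab, setIntegral_indicator measurableSet_Ici, hIcc,
      integral_Icc_eq_integral_Ioc, integral_of_le hx.2]
  have inner_t : ∀ t ∈ uIcc a b, ∫ x in Ioc a b, k t x ∂μ = μ.real (Ioc a t) • g t := by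
    intro t ht
    rw [uIcc_of_le hab] at ht
    rw [setIntegral_indicator measurableSet_Iic, Ioc_inter_Iic, inf_eq_right.2 ht.2,
      setIntegral_const]
  rw [← setIntegral_congr_fun measurableSet_Ioc inner_x, ← intervalIntegral_integral_swap hk,
    integral_congr inner_t]

theorem setIntegral_Ioc_eq_sub_intervalIntegral (μ : Measure ℝ) [IsFiniteMeasure μ]
    {f f' : ℝ → E} (hf : ∀ t, HasDerivAt f (f' t) t) (hf' : Continuous f') {a b : ℝ}
    (hab : a ≤ b) :
    ∫ x in Ioc a b, f x ∂μ
      = μ.real (Iic b) • f b - μ.real (Iic a) • f a - ∫ t in a..b, μ.real (Iic t) • f' t := by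
  have ftc : ∀ x y, ∫ t in x..y, f' t = f y - f x := fun x y =>
    integral_eq_sub_of_hasDerivAt (fun t _ => hf t) (hf'.intervalIntegrable x y)
  have hf_cont : Continuous f := continuous_iff_continuousAt.2 fun t => (hf t).continuousAt
  have hfb : ∀ x, f x = f b - ∫ t in x..b, f' t := fun x => by rw [ftc]; abel
  have hFf' : IntervalIntegrable (fun t => μ.real (Iic t) • f' t) volume a b :=
    (monotone_measureReal_Iic μ).intervalIntegrable.smul_continuousOn hf'.continuousOn
  calc ∫ x in Ioc a b, f x ∂μ
      = ∫ x in Ioc a b, (f b - ∫ t in x..b, f' t) ∂μ := by simp_rw [← hfb]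
    _ = μ.real (Ioc a b) • f b - ∫ t in a..b, μ.real (Ioc a t) • f' t := by
      have hprim : IntegrableOn (fun x => ∫ t in x..b, f' t) (Ioc a b) μ := by
        simp_rw [ftc]
        exact (integrable_const (f b)).sub (hf_cont.integrableOn_Icc.mono_set Ioc_subset_Icc_self)
      rw [MeasureTheory.integral_sub (integrable_const (f b)) hprim,
        setIntegral_const, setIntegral_Ioc_intervalIntegral_eq μ hf' hab]
    _ = μ.real (Ioc a b) • f b
          - ((∫ t in a..b, μ.real (Iic t) • f' t) - μ.real (Iic a) • (f b - f a)) := by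
      rw [← ftc, ← intervalIntegral.integral_smul,
        ← intervalIntegral.integral_sub hFf' (g := fun t => μ.real (Iic a) • f' t)
          ((hf'.intervalIntegrable a b).smul _)]
      congr 1
      refine intervalIntegral.integral_congr fun t ht => ?_
      rw [uIcc_of_le hab] at ht
      simp only [measureReal_Ioc_eq_sub μ ht.1, sub_smul]
    _ = _ := by rw [measureReal_Ioc_eq_sub μ hab]; module

theorem norm_setIntegral_Ioc_sub_le (μ ν : Measure ℝ) [IsFiniteMeasure μ] [IsFiniteMeasure ν]
    {f f' : ℝ → E} (hf : ∀ t, HasDerivAt f (f' t) t) (hf' : Continuous f') {a b L s : ℝ}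
    (hab : a ≤ b) (hL : ∀ t, ‖f' t‖ ≤ L) (hs : ∀ t, |ν.real (Iic t) - μ.real (Iic t)| ≤ s) :
    ‖∫ x in Ioc a b, f x ∂ν - ∫ x in Ioc a b, f x ∂μ‖ ≤ (‖f b‖ + ‖f a‖ + L * (b - a)) * s := by
  set D : ℝ → ℝ := fun t => ν.real (Iic t) - μ.real (Iic t)
  have hint : ∀ m : Measure ℝ, IsFiniteMeasure m →
      IntervalIntegrable (fun t => m.real (Iic t) • f' t) volume a b := fun m _ =>
    (monotone_measureReal_Iic m).intervalIntegrable.smul_continuousOn hf'.continuousOn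
  have hdiff : ∫ x in Ioc a b, f x ∂ν - ∫ x in Ioc a b, f x ∂μ
      = D b • f b - D a • f a - ∫ t in a..b, D t • f' t := by
    simp only [D, sub_smul]
    rw [intervalIntegral.integral_sub (hint ν ‹_›) (hint μ ‹_›),
      setIntegral_Ioc_eq_sub_intervalIntegral ν hf hf' hab,
      setIntegral_Ioc_eq_sub_intervalIntegral μ hf hf' hab]
    abel
  have hDf' : ‖∫ t in a..b, D t • f' t‖ ≤ L * (b - a) * s := by
    have := intervalIntegral.norm_integral_le_of_norm_le_const (a := a) (b := b)
      fun t _ => (norm_smul (D t) (f' t)).trans_le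
        (mul_le_mul (hs t) (hL t) (norm_nonneg _) ((abs_nonneg _).trans (hs t)))
    rw [abs_of_nonneg (sub_nonneg.2 hab)] at this
    exact this.trans_eq (by ring)
  calc ‖∫ x in Ioc a b, f x ∂ν - ∫ x in Ioc a b, f x ∂μ‖
      ≤ ‖D b • f b‖ + ‖D a • f a‖ + ‖∫ t in a..b, D t • f' t‖ := by
        rw [hdiff]; exact (norm_sub_le _ _).trans (add_le_add_left (norm_sub_le _ _) _)
    _ ≤ s * ‖f b‖ + s * ‖f a‖ + L * (b - a) * s := by
        rw [norm_smul, norm_smul]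
        gcongr
        exacts [hs b, hs a]
    _ = (‖f b‖ + ‖f a‖ + L * (b - a)) * s := by ring

end

theorem hasDerivAt_cexp_I_mul (u x : ℝ) :
    HasDerivAt (fun t : ℝ => Complex.exp (Complex.I * u * t))
      (Complex.I * u * Complex.exp (Complex.I * u * x)) x := by
  simpa [mul_comm] using ((Complex.ofRealCLM.hasDerivAt (x := x)).const_mul (Complex.I * u)).cexp

theorem norm_cexp_I_mul (u x : ℝ) : ‖Complex.exp (Complex.I * u * x)‖ = 1 := by
  rw [mul_assoc, ← Complex.ofReal_mul, Complex.norm_exp_I_mul_ofReal]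

theorem charFun_diff_bound (μ ν : Measure ℝ) [IsProbabilityMeasure μ] [IsProbabilityMeasure ν]
    (F G : ℝ → ℝ)
    (hF : ∀ x, F x = (μ (Set.Iic x)).toReal)
    (hG : ∀ x, G x = (ν (Set.Iic x)).toReal)
    (u : ℝ) (K : ℝ) (hK : 0 < K) :
    ‖(∫ x, Complex.exp (Complex.I * u * x) ∂ν) - (∫ x, Complex.exp (Complex.I * u * x) ∂μ)‖ ≤
      4 * (⨆ x : ℝ, |G x - F x|) + 2 * K * |u| * (⨆ x : ℝ, |G x - F x|)
        + 2 * F (-K) + 2 * (1 - F K) := by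
  simp only [hF, hG, ← measureReal_def]
  set s := ⨆ x : ℝ, |ν.real (Iic x) - μ.real (Iic x)|
  have hs : ∀ x, |ν.real (Iic x) - μ.real (Iic x)| ≤ s := abs_measureReal_Iic_sub_le_iSup μ ν
  set f : ℝ → ℂ := fun x => Complex.exp (Complex.I * u * x)
  have hf : ∀ x, ‖f x‖ ≤ 1 := fun x => (norm_cexp_I_mul u x).le
  have hKK : -K ≤ K := by linarith
  have hmid : ‖∫ x in Ioc (-K) K, f x ∂ν - ∫ x in Ioc (-K) K, f x ∂μ‖
      ≤ (1 + 1 + |u| * (K - -K)) * s := by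
    simpa only [f, norm_cexp_I_mul] using norm_setIntegral_Ioc_sub_le μ ν
      (hasDerivAt_cexp_I_mul u) (by fun_prop) hKK (L := |u|)
      (fun t => by simp [norm_cexp_I_mul]) hs
  have hsplit := norm_integral_sub_integral_le_split (f := f)
    (.of_bound (by fun_prop) 1 (ae_of_all μ hf)) (.of_bound (by fun_prop) 1 (ae_of_all ν hf))
    (measurableSet_Ioc (a := -K) (b := K))
  have htailν := norm_setIntegral_compl_Ioc_le ν hf (-K) K hKK
  have htailμ := norm_setIntegral_compl_Ioc_le μ hf (-K) K hKK
  linarith [abs_le.1 (hs K), abs_le.1 (hs (-K))]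
end

section
/- Let μ, ν be probability measures on ℝ with CDFs F, G. For any K > 0, |∫_{[-K,K]} e^{iux} d(ν - μ)(x)| ≤ 2 sup_x |G(x) - F(x)| + 2K|u|·sup_x |G(x) - F(x)|. -/
/-!
For a Stieltjes function `f` and a `C¹` function `g`, writing `g x = g b - ∫_x^b g'` and applying
Fubini gives the integration by parts formula
`∫_{[a,b]} g d(df) = f(b) g(b) - f(a⁻) g(a) - ∫_a^b f g'`.
A probability measure is the Stieltjes measure of its CDF, so subtracting the formulas for `ν`
and `μ` with `g x = exp (i u x)` leaves two boundary terms, each bounded by `sup |G - F|`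
(the left limit at `-K` being a limit of values of `G - F`), and the integral of `(G - F) g'`
over an interval of length `2K`, where `|g'| = |u|`.
-/

open MeasureTheory Complex Set Filter Function ProbabilityTheory

theorem abs_leftLim_sub_leftLim_le {F G : ℝ → ℝ} {M : ℝ} (hF : Monotone F) (hG : Monotone G)
    (h : ∀ x, |G x - F x| ≤ M) (a : ℝ) : |leftLim G a - leftLim F a| ≤ M :=
  le_of_tendsto ((hG.tendsto_leftLim a).sub (hF.tendsto_leftLim a)).abs (Eventually.of_forall h)

section IntegrationByParts

variable {E : Type*} [NormedAddCommGroup E] [NormedSpace ℝ E] [CompleteSpace E]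
  {g g' : ℝ → E} {a b : ℝ}

theorem setIntegral_Icc_eq_measureReal_smul_sub_integral (ρ : Measure ℝ)
    [IsFiniteMeasureOnCompacts ρ] (hab : a ≤ b) (hg : ∀ t, HasDerivAt g (g' t) t)
    (hg' : Continuous g') :
    ∫ x in Icc a b, g x ∂ρ
      = ρ.real (Icc a b) • g b - ∫ t in a..b, ρ.real (Icc a t) • g' t := by
  have : IsFiniteMeasure (ρ.restrict (Icc a b)) :=
    isFiniteMeasure_restrict.2 isCompact_Icc.measure_lt_top.ne
  set k : ℝ → ℝ → E := fun x t => (Ici x).indicator g' t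
  have hk : Integrable (uncurry k) ((ρ.restrict (Icc a b)).prod (volume.restrict (Icc a b))) := by
    have : uncurry k = {p : ℝ × ℝ | p.1 ≤ p.2}.indicator (fun p => g' p.2) := by
      ext ⟨x, t⟩; simp [k, indicator]
    rw [this]
    exact (hg'.integrableOn_Icc.comp_snd _).indicator
      (measurableSet_le measurable_fst measurable_snd)
  have hftc : ∀ x ∈ Icc a b, g x = g b - ∫ t in Icc a b, k x t := by
    intro x hx
    have hIcc : Icc a b ∩ Ici x = Icc x b := by
      rw [← Ici_inter_Iic, inter_right_comm, Ici_inter_Ici, sup_eq_right.2 hx.1, Ici_inter_Iic]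
    rw [setIntegral_indicator measurableSet_Ici, hIcc,
      integral_Icc_eq_integral_Ioc, ← intervalIntegral.integral_of_le hx.2,
      intervalIntegral.integral_eq_sub_of_hasDerivAt (fun t _ => hg t) (hg'.intervalIntegrable _ _)]
    abel
  have hinner : ∀ t ∈ Icc a b, ∫ x in Icc a b, k x t ∂ρ = ρ.real (Icc a t) • g' t := by
    intro t ht
    have : (fun x => k x t) = (Iic t).indicator (fun _ => g' t) := by ext x; simp [k, indicator]
    rw [this, integral_indicator_const _ measurableSet_Iic,
      measureReal_restrict_apply measurableSet_Iic, ← Ici_inter_Iic, inter_left_comm,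
      Iic_inter_Iic, inf_eq_left.2 ht.2, Ici_inter_Iic]
  calc ∫ x in Icc a b, g x ∂ρ = ∫ x in Icc a b, (g b - ∫ t in Icc a b, k x t) ∂ρ :=
        setIntegral_congr_fun measurableSet_Icc hftc
    _ = ρ.real (Icc a b) • g b - ∫ x in Icc a b, (∫ t in Icc a b, k x t) ∂ρ := by
        have hint : Integrable (fun x => ∫ t in Icc a b, k x t) (ρ.restrict (Icc a b)) :=
          hk.integral_prod_left
        rw [integral_sub (integrable_const _) hint, setIntegral_const]
    _ = ρ.real (Icc a b) • g b - ∫ t in Icc a b, ∫ x in Icc a b, k x t ∂ρ := by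
        rw [integral_integral_swap hk]
    _ = _ := by
        rw [setIntegral_congr_fun measurableSet_Icc hinner, integral_Icc_eq_integral_Ioc,
          ← intervalIntegral.integral_of_le hab]

theorem StieltjesFunction.setIntegral_Icc_eq (f : StieltjesFunction ℝ) (hab : a ≤ b)
    (hg : ∀ t, HasDerivAt g (g' t) t) (hg' : Continuous g') :
    ∫ x in Icc a b, g x ∂f.measure
      = f b • g b - leftLim f a • g a - ∫ t in a..b, f t • g' t := by
  have hIcc : ∀ t, a ≤ t → f.measure.real (Icc a t) = f t - leftLim f a := fun t hat => by
    rw [measureReal_def, f.measure_Icc,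
      ENNReal.toReal_ofReal (sub_nonneg.2 (f.mono.leftLim_le hat))]
  have hsub : ∫ t in a..b, f.measure.real (Icc a t) • g' t
      = (∫ t in a..b, f t • g' t) - leftLim f a • (g b - g a) := by
    rw [intervalIntegral.integral_congr (g := fun t => f t • g' t - leftLim f a • g' t)
        fun t ht => by rw [uIcc_of_le hab] at ht; rw [hIcc t ht.1, sub_smul],
      intervalIntegral.integral_sub (f.mono.intervalIntegrable.smul_continuousOn hg'.continuousOn)
        ((by fun_prop : Continuous fun t => leftLim f a • g' t).intervalIntegrable a b),
      intervalIntegral.integral_smul,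
      intervalIntegral.integral_eq_sub_of_hasDerivAt (fun t _ => hg t) (hg'.intervalIntegrable _ _)]
  rw [setIntegral_Icc_eq_measureReal_smul_sub_integral _ hab hg hg', hsub, hIcc b hab, sub_smul,
    smul_sub]
  abel

theorem StieltjesFunction.norm_setIntegral_Icc_sub_le (F G : StieltjesFunction ℝ) {M B : ℝ}
    (hab : a ≤ b) (hg : ∀ t, HasDerivAt g (g' t) t) (hg' : Continuous g')
    (hB : ∀ t ∈ Icc a b, ‖g' t‖ ≤ B) (hFG : ∀ x, |G x - F x| ≤ M) :
    ‖∫ x in Icc a b, g x ∂G.measure - ∫ x in Icc a b, g x ∂F.measure‖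
      ≤ M * ‖g b‖ + M * ‖g a‖ + M * B * (b - a) := by
  have hM : 0 ≤ M := (abs_nonneg _).trans (hFG a)
  have hint (f : StieltjesFunction ℝ) : IntervalIntegrable (fun t => f t • g' t) volume a b :=
    f.mono.intervalIntegrable.smul_continuousOn hg'.continuousOn
  have hdiff : ∫ x in Icc a b, g x ∂G.measure - ∫ x in Icc a b, g x ∂F.measure
      = (G b - F b) • g b - (leftLim G a - leftLim F a) • g a
        - ∫ t in a..b, (G t - F t) • g' t := by
    simp only [G.setIntegral_Icc_eq hab hg hg', F.setIntegral_Icc_eq hab hg hg', sub_smul,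
      intervalIntegral.integral_sub (hint G) (hint F)]
    abel
  have hintegral : ‖∫ t in a..b, (G t - F t) • g' t‖ ≤ M * B * (b - a) := by
    refine (intervalIntegral.norm_integral_le_of_norm_le_const fun t ht => ?_).trans_eq
      (by rw [abs_of_nonneg (sub_nonneg.2 hab)])
    rw [uIoc_of_le hab] at ht
    rw [norm_smul, Real.norm_eq_abs]
    exact mul_le_mul (hFG t) (hB t (Ioc_subset_Icc_self ht)) (norm_nonneg _) hM
  rw [hdiff]
  refine (norm_sub_le _ _).trans
    (add_le_add ((norm_sub_le _ _).trans (add_le_add ?_ ?_)) hintegral)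
  · rw [norm_smul, Real.norm_eq_abs]
    exact mul_le_mul_of_nonneg_right (hFG b) (norm_nonneg _)
  · rw [norm_smul, Real.norm_eq_abs]
    exact mul_le_mul_of_nonneg_right (abs_leftLim_sub_leftLim_le F.mono G.mono hFG a)
      (norm_nonneg _)

end IntegrationByParts

theorem hasDerivAt_cexp_I_mul_mul (u t : ℝ) :
    HasDerivAt (fun t : ℝ => cexp (I * u * t)) (I * u * cexp (I * u * t)) t := by
  simpa [mul_comm] using (((hasDerivAt_id t).ofReal_comp).const_mul (I * u)).cexp

theorem norm_cexp_I_mul_mul (u t : ℝ) : ‖cexp (I * u * t)‖ = 1 := by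
  rw [mul_assoc, ← ofReal_mul, norm_exp_I_mul_ofReal]

theorem charFun_middle_part_bound (μ ν : Measure ℝ) [IsProbabilityMeasure μ] [IsProbabilityMeasure ν]
    (F G : ℝ → ℝ)
    (hF : ∀ x, F x = (μ (Set.Iic x)).toReal)
    (hG : ∀ x, G x = (ν (Set.Iic x)).toReal)
    (u : ℝ) (K : ℝ) (hK : 0 < K) :
    ‖(∫ x in Set.Icc (-K) K, Complex.exp (Complex.I * u * x) ∂ν)
      - (∫ x in Set.Icc (-K) K, Complex.exp (Complex.I * u * x) ∂μ)‖ ≤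
      2 * (⨆ x : ℝ, |G x - F x|) + 2 * K * |u| * (⨆ x : ℝ, |G x - F x|) := by
  have hF_cdf : F = cdf μ := funext fun x => by rw [hF, cdf_eq_real, measureReal_def]
  have hG_cdf : G = cdf ν := funext fun x => by rw [hG, cdf_eq_real, measureReal_def]
  subst hF_cdf hG_cdf
  have hbdd : BddAbove (range fun x => |cdf ν x - cdf μ x|) := ⟨1, by
    rintro _ ⟨x, rfl⟩
    exact abs_sub_le_of_nonneg_of_le (cdf_nonneg ν x) (cdf_le_one ν x) (cdf_nonneg μ x)
      (cdf_le_one μ x)⟩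
  have hderiv_norm (t : ℝ) : ‖I * u * cexp (I * u * t)‖ = |u| := by
    rw [norm_mul, norm_mul, norm_I, norm_real, norm_cexp_I_mul_mul, Real.norm_eq_abs, one_mul,
      mul_one]
  have hbound := (cdf μ).norm_setIntegral_Icc_sub_le (cdf ν) (neg_le_self hK.le)
    (hasDerivAt_cexp_I_mul_mul u) (by fun_prop) (fun t _ => (hderiv_norm t).le) (le_ciSup hbdd)
  rw [measure_cdf, measure_cdf, norm_cexp_I_mul_mul, norm_cexp_I_mul_mul] at hbound
  linarith
end

section
/- Under the same setup, the unique maximizer x' of h(x) = (ε e^{-r} - x)/(1 + (1/2)(c/x)^{1/α}) on (0, ε e^{-r}] satisfies the bounds ε e^{-r}·( (2α/c^{1/α})(ε e^{-r}/(1+α))^{1/α} + (1+α) )^{-1} < x' < ε e^{-r}/(1+α). -/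
/-!
With `E = ε e^{-r}` and `K = 2α / c^{1/α}`, the stationarity equation reads
`E = x' (K x'^{1/α} + (1 + α))`. Dropping the positive term `K x'^{1/α}` gives
`x' < E / (1 + α)`; feeding this upper bound back into the increasing factor `x'^{1/α}`
gives `E < x' (K (E / (1 + α))^{1/α} + (1 + α))`, which is the lower bound.
-/

open Real

section
variable {K b p x E : ℝ}

lemma lt_div_of_eq_mul_rpow_add (hK : 0 < K) (hb : 0 < b) (hx : 0 < x)
    (hE : E = x * (K * x ^ p + b)) : x < E / b := by
  have hterm : 0 < x * (K * x ^ p) := mul_pos hx (mul_pos hK (rpow_pos_of_pos hx p))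
  rw [lt_div_iff₀ hb, hE]
  linarith

lemma mul_inv_lt_of_eq_mul_rpow_add (hK : 0 < K) (hb : 0 < b) (hp : 0 < p) (hx : 0 < x)
    (hE : E = x * (K * x ^ p + b)) : E * (K * (E / b) ^ p + b)⁻¹ < x := by
  have hupper := lt_div_of_eq_mul_rpow_add hK hb hx hE
  have hD : 0 < K * (E / b) ^ p + b :=
    add_pos (mul_pos hK (rpow_pos_of_pos (hx.trans hupper) p)) hb
  have hpow : K * x ^ p < K * (E / b) ^ p :=
    mul_lt_mul_of_pos_left (rpow_lt_rpow hx.le hupper hp) hK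
  rw [mul_inv_lt_iff₀ hD]
  calc E = x * (K * x ^ p + b) := hE
    _ < x * (K * (E / b) ^ p + b) := mul_lt_mul_of_pos_left (by linarith) hx

end

theorem maximizer_bounds_general (α ε r c x' : ℝ) (hα : α ∈ Set.Ioc (0:ℝ) 2)
    (hc : 0 < c)
    (hx' : x' ∈ Set.Ioc (0:ℝ) (ε * Real.exp (-r)))
    (hstat : (2 * α / c ^ (1/α)) * x' ^ (1 + 1/α) = ε * Real.exp (-r) - (1 + α) * x') :
    ε * Real.exp (-r) *
        ((2 * α / c ^ (1/α)) * (ε * Real.exp (-r) / (1 + α)) ^ (1/α) + (1 + α))⁻¹ < x' ∧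
      x' < ε * Real.exp (-r) / (1 + α) := by
  have hα0 : 0 < α := hα.1
  have hx0 : 0 < x' := hx'.1
  have hK : 0 < 2 * α / c ^ (1/α) := div_pos (by positivity) (rpow_pos_of_pos hc _)
  have hb : (0:ℝ) < 1 + α := by linarith
  have hE : ε * exp (-r) = x' * (2 * α / c ^ (1/α) * x' ^ (1/α) + (1 + α)) := by
    rw [rpow_add hx0, rpow_one] at hstat
    linarith
  exact ⟨mul_inv_lt_of_eq_mul_rpow_add hK hb (by positivity) hx0 hE,
    lt_div_of_eq_mul_rpow_add hK hb hx0 hE⟩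

theorem maximizer_bounds (α ε r c x' : ℝ) (hα : α ∈ Set.Ioc (0:ℝ) 2) (hε : 0 < ε)
    (hr : 0 < r) (hc : 0 < c)
    (hx' : x' ∈ Set.Ioc (0:ℝ) (ε * Real.exp (-r)))
    (hstat : (2 * α / c ^ (1/α)) * x' ^ (1 + 1/α) = ε * Real.exp (-r) - (1 + α) * x') :
    ε * Real.exp (-r) *
        ((2 * α / c ^ (1/α)) * (ε * Real.exp (-r) / (1 + α)) ^ (1/α) + (1 + α))⁻¹ < x' ∧
      x' < ε * Real.exp (-r) / (1 + α) :=
  maximizer_bounds_general α ε r c x' hα hc hx' hstat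
end

section
/- Let c > 0, ε > 0, and let r > 0. For a sequence α_m → 0+, let x_m be the unique solution in (0, ε e^{-r}] of x·(2α_m (x/c)^{1/α_m} + (1 + α_m)) = ε e^{-r}. Then lim_m x_m = c if c ≤ ε e^{-r}, and lim_m x_m = ε e^{-r} if c > ε e^{-r}. -/
/-!
Write `E = ε e^{-r}` and `s = (x/c)^{1/α}`, so `x (2αs + 1 + α) = E`.
If `x ≤ c` then `s ≤ 1` and `E ≤ x (1 + 3α)`; if `x ≥ c` then `2αc s ≤ E`, i.e.
`x ≤ c (E/(2cα))^α`, and `(K/α)^α → 1` as `α → 0+`. Together with `x ≤ E` this squeezes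
`x_m` between `min c (E/(1+3α_m))` and `min E (max c (c (E/(2cα_m))^{α_m}))`, both of which
tend to `min c E`.
-/

open Filter Topology Real

lemma tendsto_div_self_rpow_self_nhdsGT_zero {K : ℝ} (hK : 0 < K) :
    Tendsto (fun t => (K / t) ^ t) (𝓝[>] 0) (𝓝 1) := by
  have hcont : Tendsto (fun t => exp (t * log K - t * log t)) (𝓝 0) (𝓝 1) := by
    simpa using ((continuous_id.mul continuous_const).sub continuous_mul_log).rexp.tendsto 0
  refine (hcont.mono_left nhdsWithin_le_nhds).congr' ?_
  filter_upwards [self_mem_nhdsWithin] with t (ht : 0 < t)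
  rw [rpow_def_of_pos (div_pos hK ht), log_div hK.ne' ht.ne']
  ring_nf

section Solution

variable {c a x E : ℝ} (hc : 0 < c) (ha : 0 < a) (hx : 0 < x)
  (h : x * (2 * a * (x / c) ^ (1 / a) + (1 + a)) = E)
include hc ha hx h

lemma min_div_one_add_three_mul_le_of_solution : min c (E / (1 + 3 * a)) ≤ x := by
  rcases le_or_gt x c with hxc | hcx
  · have hs : (x / c) ^ (1 / a) ≤ 1 :=
      rpow_le_one (by positivity) ((div_le_one hc).2 hxc) (by positivity)
    have hE : E ≤ x * (1 + 3 * a) := by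
      rw [← h]
      nlinarith [mul_le_mul_of_nonneg_left hs (by positivity : (0:ℝ) ≤ 2 * a * x)]
    exact min_le_of_right_le ((div_le_iff₀ (by positivity)).2 hE)
  · exact min_le_of_left_le hcx.le

lemma le_max_mul_div_rpow_of_solution : x ≤ max c (c * (E / (2 * c) / a) ^ a) := by
  rcases le_or_gt x c with hxc | hcx
  · exact le_max_of_le_left hxc
  refine le_max_of_le_right ?_
  have hs : (x / c) ^ (1 / a) ≤ E / (2 * c) / a := by
    rw [div_div, le_div_iff₀ (by positivity), ← h]
    nlinarith [mul_le_mul_of_nonneg_left hcx.le (by positivity : 0 ≤ 2 * a * (x / c) ^ (1 / a))]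
  calc x = c * ((x / c) ^ (1 / a)) ^ a := by
        rw [← rpow_mul (by positivity), one_div_mul_cancel ha.ne', rpow_one]; field_simp
    _ ≤ c * (E / (2 * c) / a) ^ a := by gcongr

end Solution

theorem limit_of_solutions_general (c ε r : ℝ) (hc : 0 < c)
    (a : ℕ → ℝ) (ha : ∀ m, 0 < a m)
    (ha0 : Filter.Tendsto a Filter.atTop (nhds 0))
    (x : ℕ → ℝ)
    (hx : ∀ m, x m ∈ Set.Ioc (0:ℝ) (ε * Real.exp (-r)))
    (heq : ∀ m, x m * (2 * a m * (x m / c) ^ (1 / a m) + (1 + a m)) = ε * Real.exp (-r)) :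
    (c ≤ ε * Real.exp (-r) → Filter.Tendsto x Filter.atTop (nhds c)) ∧
    (ε * Real.exp (-r) < c → Filter.Tendsto x Filter.atTop (nhds (ε * Real.exp (-r)))) := by
  set E := ε * Real.exp (-r)
  have hE : 0 < E := (hx 0).1.trans_le (hx 0).2
  have ha0' : Tendsto a atTop (𝓝[>] 0) := tendsto_nhdsWithin_iff.2 ⟨ha0, .of_forall ha⟩
  have hlower : Tendsto (fun m => min c (E / (1 + 3 * a m))) atTop (𝓝 (min c E)) := by
    simpa using tendsto_const_nhds.min (tendsto_const_nhds.div
      (tendsto_const_nhds.add (ha0.const_mul 3)) (by norm_num : (1:ℝ) + 3 * 0 ≠ 0))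
  have hupper : Tendsto (fun m => min E (max c (c * (E / (2 * c) / a m) ^ a m))) atTop
      (𝓝 (min c E)) := by
    have hK : 0 < E / (2 * c) := by positivity
    have hpow := ((tendsto_div_self_rpow_self_nhdsGT_zero hK).comp ha0').const_mul c
    simpa [min_comm] using
      (tendsto_const_nhds (x := E)).min ((tendsto_const_nhds (x := c)).max hpow)
  have hlim : Tendsto x atTop (𝓝 (min c E)) :=
    tendsto_of_tendsto_of_tendsto_of_le_of_le hlower hupper
      (fun m => min_div_one_add_three_mul_le_of_solution hc (ha m) (hx m).1 (heq m))
      (fun m => le_min (hx m).2 (le_max_mul_div_rpow_of_solution hc (ha m) (hx m).1 (heq m)))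
  exact ⟨fun hcE => min_eq_left hcE ▸ hlim, fun hEc => min_eq_right hEc.le ▸ hlim⟩

theorem limit_of_solutions (c ε r : ℝ) (hc : 0 < c) (hε : 0 < ε) (hr : 0 < r)
    (a : ℕ → ℝ) (ha : ∀ m, 0 < a m)
    (ha0 : Filter.Tendsto a Filter.atTop (nhds 0))
    (x : ℕ → ℝ)
    (hx : ∀ m, x m ∈ Set.Ioc (0:ℝ) (ε * Real.exp (-r)))
    (heq : ∀ m, x m * (2 * a m * (x m / c) ^ (1 / a m) + (1 + a m)) = ε * Real.exp (-r)) :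
    (c ≤ ε * Real.exp (-r) → Filter.Tendsto x Filter.atTop (nhds c)) ∧
    (ε * Real.exp (-r) < c → Filter.Tendsto x Filter.atTop (nhds (ε * Real.exp (-r)))) :=
  limit_of_solutions_general c ε r hc a ha ha0 x hx heq
end

section
/- Fix constants 0 < r_low < r_high and ε > 0 with r_high - 2ε > r_low + 2ε. Let r, r̂ : (0,∞) → (0,∞) be functions with r(u) = (γ u)^α for some γ > 0, α ∈ (0,2], and suppose u₁, u₂ > 0 satisfy r̂(u₁) = r_high - ε, r̂(u₂) = r_low + ε, and sup_{u : r(u) ∈ [r_low, r_high]} |ln r(u) - ln r̂(u)| ≤ ε, and that r(u₁), r(u₂) ∈ [r_low, r_high] with r_high - 2ε ≤ r(u₁) and r(u₂) ≤ r_low + 2ε. Define α̂ = (ln(r_high - ε) - ln(r_low + ε))/(ln u₁ - ln u₂). Then for any ε₁ > 0 satisfying (ε₁/4)·ln((r_high - 2ε)/(r_low + 2ε)) ≥ ε, we have |α̂ - α| < ε₁. -/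
/-!
Since `log r(u) = α (log γ + log u)`, the estimator equals `α (A - B) / (L₁ - L₂)` with
`A - B = log(r_high - ε) - log(r_low + ε)` and `L₁ - L₂ = log r(u₁) - log r(u₂)`. The sup bound makes
the two differences `2ε`-close, and `L₁ - L₂ ≥ log(r_high - 2ε) - log(r_low + 2ε)`, so the relative
error is at most `α · 2ε / log((r_high - 2ε)/(r_low + 2ε)) ≤ ε₁`. The inequality is strict because
both bounds can be attained together only if `r(u₁) = r_high - 2ε` and `r(u₂) = r_low + 2ε`, and then
the strict concavity of `log` makes `A - B - (L₁ - L₂)` fall short of `2ε`.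
-/

open Real

lemma log_sub_log_eq_log_rpow_sub_div {γ α u₁ u₂ : ℝ} (hγ : 0 < γ) (hα : α ≠ 0)
    (hu₁ : 0 < u₁) (hu₂ : 0 < u₂) :
    log u₁ - log u₂ = (log ((γ * u₁) ^ α) - log ((γ * u₂) ^ α)) / α := by
  rw [log_rpow (mul_pos hγ hu₁), log_rpow (mul_pos hγ hu₂), log_mul hγ.ne' hu₁.ne',
    log_mul hγ.ne' hu₂.ne']
  field_simp
  ring

lemma log_add_sub_log_lt_of_lt {x y δ : ℝ} (hx : 0 < x) (hxy : x < y) (hδ : 0 < δ) :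
    log (y + δ) - log y < log (x + δ) - log x := by
  have hy : 0 < y := hx.trans hxy
  rw [← log_div (by linarith) hy.ne', ← log_div (by linarith) hx.ne', add_div, add_div,
    div_self hy.ne', div_self hx.ne']
  exact log_lt_log (by positivity) (by gcongr)

lemma abs_mul_div_sub_lt {α n d d₀ ε ε₁ : ℝ} (hα : |α| ≤ 2) (hd₀ : 0 < d₀) (hd : d₀ ≤ d)
    (hn : |n - d| ≤ 2 * ε) (hstrict : d₀ < d ∨ |n - d| < 2 * ε) (hε₁ : 0 < ε₁)
    (hbig : 4 * ε ≤ ε₁ * d₀) :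
    |α * n / d - α| < ε₁ := by
  have hdpos : 0 < d := hd₀.trans_le hd
  have herr : α * n / d - α = α * (n - d) / d := by field_simp
  rw [herr, abs_div, abs_mul, abs_of_pos hdpos, div_lt_iff₀ hdpos]
  have hmul : |α| * |n - d| ≤ 2 * |n - d| := mul_le_mul_of_nonneg_right hα (abs_nonneg _)
  rcases hstrict with hlt | hlt
  · have : ε₁ * d₀ < ε₁ * d := mul_lt_mul_of_pos_left hlt hε₁
    linarith
  · have : ε₁ * d₀ ≤ ε₁ * d := mul_le_mul_of_nonneg_left hd hε₁.le
    linarith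

lemma log_level_gap_or_abs_lt {rlow rhigh ε l₁ l₂ : ℝ} (hlow : 0 < rlow + ε) (hε : 0 < ε)
    (horder : rlow + 2 * ε < rhigh - 2 * ε)
    (hl₁ : log (rhigh - 2 * ε) ≤ l₁) (hl₂ : l₂ ≤ log (rlow + 2 * ε))
    (hl₂' : l₂ - log (rlow + ε) ≤ ε) :
    log (rhigh - 2 * ε) - log (rlow + 2 * ε) < l₁ - l₂ ∨
      |(log (rhigh - ε) - log (rlow + ε)) - (l₁ - l₂)| < 2 * ε := by
  rcases (show log (rhigh - 2 * ε) - log (rlow + 2 * ε) ≤ l₁ - l₂ by linarith).lt_or_eq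
    with hlt | heq
  · exact Or.inl hlt
  right
  have e₁ : l₁ = log (rhigh - 2 * ε) := by linarith
  have e₂ : l₂ = log (rlow + 2 * ε) := by linarith
  subst e₁ e₂
  have hconc := log_add_sub_log_lt_of_lt hlow (by linarith : rlow + ε < rhigh - 2 * ε) hε
  have hs : 0 < log (rhigh - ε) - log (rhigh - 2 * ε) :=
    sub_pos.mpr (log_lt_log (by linarith) (by linarith))
  rw [show rhigh - 2 * ε + ε = rhigh - ε by ring,
    show rlow + ε + ε = rlow + 2 * ε by ring] at hconc
  rw [abs_lt]
  constructor <;> linarith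

theorem alpha_estimate_precision
    (rlow rhigh ε γ α : ℝ) (u₁ u₂ : ℝ) (rhat : ℝ → ℝ) (ε₁ : ℝ)
    (hrlow : 0 < rlow) (horder : rlow + 2*ε < rhigh - 2*ε) (hε : 0 < ε)
    (hγ : 0 < γ) (hα : α ∈ Set.Ioc (0:ℝ) 2)
    (hu₁ : 0 < u₁) (hu₂ : 0 < u₂)
    (hhat₁ : rhat u₁ = rhigh - ε) (hhat₂ : rhat u₂ = rlow + ε)
    (hsup : ∀ u : ℝ, 0 < u → (γ * u) ^ α ∈ Set.Icc rlow rhigh →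
      |Real.log ((γ * u) ^ α) - Real.log (rhat u)| ≤ ε)
    (hr₁mem : (γ * u₁) ^ α ∈ Set.Icc rlow rhigh)
    (hr₂mem : (γ * u₂) ^ α ∈ Set.Icc rlow rhigh)
    (hr₁ : rhigh - 2*ε ≤ (γ * u₁) ^ α)
    (hr₂ : (γ * u₂) ^ α ≤ rlow + 2*ε)
    (hε₁ : 0 < ε₁)
    (hbig : ε ≤ (ε₁ / 4) * Real.log ((rhigh - 2*ε) / (rlow + 2*ε))) :
    |(Real.log (rhigh - ε) - Real.log (rlow + ε)) / (Real.log u₁ - Real.log u₂) - α| < ε₁ := by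
  obtain ⟨hα₀, hα₂⟩ := hα
  have hlow : 0 < rlow + 2 * ε := by linarith
  have hl₁ : log (rhigh - 2 * ε) ≤ log ((γ * u₁) ^ α) := log_le_log (by linarith) hr₁
  have hl₂ : log ((γ * u₂) ^ α) ≤ log (rlow + 2 * ε) :=
    log_le_log (rpow_pos_of_pos (mul_pos hγ hu₂) α) hr₂
  have hsup₁ := abs_le.mp (hhat₁ ▸ hsup u₁ hu₁ hr₁mem)
  have hsup₂ := abs_le.mp (hhat₂ ▸ hsup u₂ hu₂ hr₂mem)
  rw [log_sub_log_eq_log_rpow_sub_div hγ hα₀.ne' hu₁ hu₂, div_div_eq_mul_div, mul_comm]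
  rw [log_div (by linarith) hlow.ne'] at hbig
  refine abs_mul_div_sub_lt (abs_le.mpr ⟨by linarith, hα₂⟩)
    (sub_pos.mpr (log_lt_log hlow horder)) (by linarith) (abs_le.mpr ⟨?_, ?_⟩)
    (log_level_gap_or_abs_lt (by linarith) hε horder hl₁ hl₂ (by linarith)) hε₁ (by linarith)
  all_goals linarith
end

section
/- Let ε > 0, r > 0, and for α ∈ (0,2] let k(α, ε, r) = (1/8)·(sup_{x ∈ (0, ε e^{-r}]} (ε e^{-r} - x)/(1 + (1/2)(4Lr/x)^{1/α}))², where L > 0 is a fixed constant. Then for each α, the function r ↦ k(α, ε, r) is strictly decreasing on (0,∞), lim_{r→0+} k(α, ε, r) = ε²/8, and lim_{r→∞} k(α, ε, r) = 0. -/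
noncomputable def kFun (L α ε r : ℝ) : ℝ :=
  (1/8) * (⨆ x : Set.Ioc (0:ℝ) (ε * Real.exp (-r)),
    (ε * Real.exp (-r) - (x : ℝ)) / (1 + (1/2) * (4 * L * r / (x : ℝ)) ^ (1/α)))^2

/-!
Write `m = ε e^{-r}` and `S(r)` for the supremum in `kFun`. Since the denominator is at least `1`,
`0 ≤ S(r) ≤ m`, which gives the limit at infinity and the upper half of the limit at `0`; the lower
half comes from evaluating at a fixed point `x` and letting `r → 0`. For strict monotonicity, let
`r₁ < r₂` and `λ = m(r₁) / m(r₂) > 1`. The substitution `x ↦ λ x` maps `(0, m(r₂)]` onto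
`(0, m(r₁)]`, multiplies the numerator by `λ` and, since `r₁ / λ < r₂`, does not increase the
denominator; hence `S(r₁) ≥ λ S(r₂) > S(r₂)`.
-/

namespace KFun

open Real Set Filter Topology

noncomputable def kDenom (L α r x : ℝ) : ℝ := 1 + (1/2) * (4 * L * r / x) ^ (1/α)

noncomputable def kIntegrand (L α r m x : ℝ) : ℝ := (m - x) / kDenom L α r x

noncomputable def kSup (L α r m : ℝ) : ℝ := ⨆ x : Ioc (0:ℝ) m, kIntegrand L α r m x

theorem kFun_eq (L α ε r : ℝ) : kFun L α ε r = 1 / 8 * kSup L α r (ε * exp (-r)) ^ 2 := rfl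

variable {L α r m x : ℝ}

theorem one_le_kDenom (hL : 0 ≤ L) (hr : 0 ≤ r) (hx : 0 ≤ x) : 1 ≤ kDenom L α r x := by
  have : 0 ≤ (4 * L * r / x) ^ (1/α) := by positivity
  unfold kDenom
  linarith

theorem kDenom_le_kDenom {r₁ r₂ x₁ x₂ : ℝ} (hL : 0 ≤ L) (hα : 0 ≤ α) (h₀ : 0 ≤ r₁ / x₁)
    (h : r₁ / x₁ ≤ r₂ / x₂) : kDenom L α r₁ x₁ ≤ kDenom L α r₂ x₂ := by
  unfold kDenom
  simp only [mul_div_assoc]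
  gcongr

theorem tendsto_kDenom_zero (hα : 0 < α) (L x : ℝ) :
    Tendsto (fun r => kDenom L α r x) (𝓝 0) (𝓝 1) := by
  have hcont : ContinuousAt (fun r => kDenom L α r x) 0 := by
    unfold kDenom
    exact continuousAt_const.add
      (continuousAt_const.mul ((by fun_prop : ContinuousAt (fun r => 4 * L * r / x) 0).rpow_const
        (Or.inr (by positivity))))
  convert hcont.tendsto using 2
  simp [kDenom, zero_rpow (inv_pos.2 hα).ne']

theorem kIntegrand_nonneg (hL : 0 ≤ L) (hr : 0 ≤ r) (hx : x ∈ Ioc 0 m) :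
    0 ≤ kIntegrand L α r m x :=
  div_nonneg (sub_nonneg.2 hx.2) (zero_le_one.trans (one_le_kDenom hL hr hx.1.le))

theorem kIntegrand_le (hL : 0 ≤ L) (hr : 0 ≤ r) (hx : x ∈ Ioc 0 m) :
    kIntegrand L α r m x ≤ m :=
  (div_le_self (sub_nonneg.2 hx.2) (one_le_kDenom hL hr hx.1.le)).trans (by linarith [hx.1])

theorem kIntegrand_le_kSup (hL : 0 ≤ L) (hr : 0 ≤ r) (hx : x ∈ Ioc 0 m) :
    kIntegrand L α r m x ≤ kSup L α r m :=
  le_ciSup (f := fun y : Ioc (0:ℝ) m => kIntegrand L α r m y)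
    ⟨m, forall_mem_range.2 fun y => kIntegrand_le hL hr y.2⟩ ⟨x, hx⟩

theorem kSup_nonneg (hL : 0 ≤ L) (hr : 0 ≤ r) : 0 ≤ kSup L α r m :=
  Real.iSup_nonneg fun y => kIntegrand_nonneg hL hr y.2

theorem kSup_le (hL : 0 ≤ L) (hr : 0 ≤ r) (hm : 0 ≤ m) : kSup L α r m ≤ m :=
  Real.iSup_le (fun y => kIntegrand_le hL hr y.2) hm

theorem kSup_pos (hL : 0 ≤ L) (hr : 0 ≤ r) (hm : 0 < m) : 0 < kSup L α r m := by
  have hx : m / 2 ∈ Ioc 0 m := ⟨by positivity, by linarith⟩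
  have hpos : 0 < kIntegrand L α r m (m / 2) :=
    div_pos (by linarith) (zero_lt_one.trans_le (one_le_kDenom hL hr hx.1.le))
  exact hpos.trans_le (kIntegrand_le_kSup hL hr hx)

theorem div_mul_kSup_le_kSup {r₁ r₂ m₁ m₂ : ℝ} (hL : 0 ≤ L) (hα : 0 ≤ α) (hr₁ : 0 ≤ r₁)
    (hr : r₁ ≤ r₂) (hm₂ : 0 < m₂) (hm : m₂ ≤ m₁) :
    m₁ / m₂ * kSup L α r₂ m₂ ≤ kSup L α r₁ m₁ := by
  set c := m₁ / m₂
  have hc : 1 ≤ c := (one_le_div hm₂).2 hm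
  rw [kSup, Real.mul_iSup_of_nonneg (by positivity)]
  refine Real.iSup_le (fun ⟨x, hx⟩ => ?_) (kSup_nonneg hL hr₁)
  have hcx : c * x ∈ Ioc 0 m₁ :=
    ⟨by positivity [hx.1], (mul_le_mul_of_nonneg_left hx.2 (by positivity)).trans_eq
      (div_mul_cancel₀ _ hm₂.ne')⟩
  have hratio : r₁ / (c * x) ≤ r₂ / x := by
    rw [← div_div]
    exact div_le_div_of_nonneg_right ((div_le_self hr₁ hc).trans hr) hx.1.le
  have hnum : m₁ - c * x = c * (m₂ - x) := by
    simp only [c]; field_simp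
  calc c * kIntegrand L α r₂ m₂ x = c * (m₂ - x) / kDenom L α r₂ x := mul_div_assoc' ..
    _ ≤ (m₁ - c * x) / kDenom L α r₁ (c * x) := by
        rw [hnum]
        exact div_le_div_of_nonneg_left (by nlinarith [hx.2])
          (zero_lt_one.trans_le (one_le_kDenom hL hr₁ hcx.1.le))
          (kDenom_le_kDenom hL hα (by positivity [hx.1]) hratio)
    _ ≤ kSup L α r₁ m₁ := kIntegrand_le_kSup hL hr₁ hcx

variable {ε : ℝ}

theorem strictAntiOn_kSup (hL : 0 ≤ L) (hα : 0 ≤ α) (hε : 0 < ε) :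
    StrictAntiOn (fun r => kSup L α r (ε * exp (-r))) (Ici 0) := by
  intro r₁ hr₁ r₂ hr₂ h
  have hm₂ : 0 < ε * exp (-r₂) := by positivity
  have hm : ε * exp (-r₂) < ε * exp (-r₁) := by gcongr
  have hS := kSup_pos (α := α) hL hr₂ hm₂
  calc kSup L α r₂ (ε * exp (-r₂))
      < ε * exp (-r₁) / (ε * exp (-r₂)) * kSup L α r₂ (ε * exp (-r₂)) :=
        lt_mul_left hS ((one_lt_div hm₂).2 hm)
    _ ≤ kSup L α r₁ (ε * exp (-r₁)) :=
        div_mul_kSup_le_kSup hL hα hr₁ h.le hm₂ hm.le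

theorem tendsto_kSup_nhdsGT_zero (hL : 0 ≤ L) (hα : 0 < α) (hε : 0 < ε) :
    Tendsto (fun r => kSup L α r (ε * exp (-r))) (𝓝[>] 0) (𝓝 ε) := by
  have hm : Tendsto (fun r => ε * exp (-r)) (𝓝[>] 0) (𝓝 ε) := by
    simpa using ((by fun_prop : Continuous fun r : ℝ => ε * exp (-r)).tendsto 0).mono_left
      nhdsWithin_le_nhds
  refine tendsto_order.2 ⟨fun a ha => ?_, fun b hb => ?_⟩
  · obtain ⟨c, hac, hcε⟩ := exists_between (max_lt ha hε)
    have hpos : 0 < ε - c := by linarith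
    have hlim : Tendsto (fun r => kIntegrand L α r (ε * exp (-r)) (ε - c)) (𝓝[>] 0)
        (𝓝 ((ε - (ε - c)) / 1)) :=
      (hm.sub tendsto_const_nhds).div
        ((tendsto_kDenom_zero hα L _).mono_left nhdsWithin_le_nhds) one_ne_zero
    have hac' : a < (ε - (ε - c)) / 1 := by linarith [le_max_left a 0]
    have hcε' : ε - c < ε := by linarith [le_max_right a 0]
    filter_upwards [hlim.eventually (eventually_gt_nhds hac'),
      hm.eventually (eventually_ge_nhds hcε'),
      self_mem_nhdsWithin] with r hlt hle hr
    exact hlt.trans_le (kIntegrand_le_kSup hL (le_of_lt hr) ⟨hpos, hle⟩)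
  · filter_upwards [self_mem_nhdsWithin] with r (hr : 0 < r)
    calc kSup L α r (ε * exp (-r)) ≤ ε * exp (-r) := kSup_le hL hr.le (by positivity)
      _ ≤ ε := mul_le_of_le_one_right hε.le (exp_le_one_iff.2 (by linarith))
      _ < b := hb

theorem tendsto_kSup_atTop (hL : 0 ≤ L) (hε : 0 ≤ ε) :
    Tendsto (fun r => kSup L α r (ε * exp (-r))) atTop (𝓝 0) := by
  have hm : Tendsto (fun r => ε * exp (-r)) atTop (𝓝 0) := by
    simpa using tendsto_exp_neg_atTop_nhds_zero.const_mul ε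
  refine tendsto_of_tendsto_of_tendsto_of_le_of_le' tendsto_const_nhds hm ?_ ?_
  all_goals filter_upwards [eventually_ge_atTop 0] with r hr
  exacts [kSup_nonneg hL hr, kSup_le hL hr (by positivity)]

end KFun

open KFun in
theorem kFun_monotone_limits (L ε α : ℝ) (hL : 0 < L) (hε : 0 < ε)
    (hα : α ∈ Set.Ioc (0:ℝ) 2) :
    StrictAntiOn (fun r => kFun L α ε r) (Set.Ioi 0) ∧
    Filter.Tendsto (fun r => kFun L α ε r) (nhdsWithin 0 (Set.Ioi 0)) (nhds (ε^2 / 8)) ∧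
    Filter.Tendsto (fun r => kFun L α ε r) Filter.atTop (nhds 0) := by
  obtain ⟨hα, -⟩ := hα
  simp only [kFun_eq]
  refine ⟨fun r₁ hr₁ r₂ hr₂ h => ?_, ?_, ?_⟩
  · dsimp only
    have hlt := strictAntiOn_kSup hL.le hα.le hε (Set.mem_Ici_of_Ioi hr₁) (Set.mem_Ici_of_Ioi hr₂) h
    have hnonneg := kSup_nonneg (α := α) (m := ε * Real.exp (-r₂)) hL.le (le_of_lt hr₂)
    gcongr
  · convert ((tendsto_kSup_nhdsGT_zero hL.le hα hε).pow 2).const_mul (1 / 8 : ℝ) using 2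
    ring
  · simpa using ((tendsto_kSup_atTop (α := α) hL.le hε.le).pow 2).const_mul (1 / 8 : ℝ)
end
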